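/- arXiv:1610.01310 — 3 statements merged into one kernel-verified Lean document; each statement's English description precedes it below -/
import Mathlib

section
/- Let ℓ ≥ 1 and let V be a finite set with ℓ+1 elements. Let ℱ be a nonempty collection of m distinct subsets of V, each of cardinality ℓ (a collection of m faces of the ℓ-simplex with vertex set V). Then for every natural number k, the number of subsets K of V with |K| = k+1 that are contained in at least one member of ℱ equals the integer ∑_{r=1}^{m} (−1)^{r−1} · C(ℓ+1−r, k+1) · C(m, r). -/
/-- Part (i) of the simplex Lemma: the number of `k`-facets of an `ℓ`-simplex
(with vertex set `V`, `|V| = ℓ+1`) lying in the union of a nonempty collection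
`ℱ` of `m` faces (subsets of `V` of cardinality `ℓ`) is
`∑_{r=1}^{m} (-1)^{r-1} C(ℓ+1-r, k+1) C(m, r)`. -/
theorem simplex_lemma_union_count {α : Type*} [DecidableEq α] (ℓ m : ℕ) (hℓ : 1 ≤ ℓ)
    (V : Finset α) (hV : V.card = ℓ + 1)
    (ℱ : Finset (Finset α)) (hne : ℱ.Nonempty) (hm : ℱ.card = m)
    (hface : ∀ F ∈ ℱ, F ⊆ V ∧ F.card = ℓ) (k : ℕ) :
    ((V.powerset.filter (fun K => K.card = k + 1 ∧ ∃ F ∈ ℱ, K ⊆ F)).card : ℤ)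
      = ∑ r ∈ Finset.Icc 1 m,
          (-1 : ℤ) ^ (r - 1) * ((ℓ + 1 - r).choose (k + 1) : ℤ) * (m.choose r : ℤ) := by
  classical
  -- Step A: the set in question is a union of `powersetCard (k+1)` of the faces
  have hset : V.powerset.filter (fun K => K.card = k + 1 ∧ ∃ F ∈ ℱ, K ⊆ F)
      = ℱ.biUnion (fun F => F.powersetCard (k + 1)) := by
    ext K
    simp only [Finset.mem_filter, Finset.mem_powerset, Finset.mem_biUnion,
      Finset.mem_powersetCard]
    constructor
    · rintro ⟨-, hK, F, hF, hKF⟩; exact ⟨F, hF, hKF, hK⟩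
    · rintro ⟨F, hF, hKF, hK⟩
      exact ⟨hKF.trans (hface F hF).1, hK, F, hF, hKF⟩
  -- each face `F` is `V` minus one vertex; key facts about intersections
  have hface_eq : ∀ {F : Finset α} {x : α}, F ∈ ℱ → x ∈ V → x ∉ F → F = V.erase x := by
    intro F x hF hxV hxF
    refine Finset.eq_of_subset_of_card_le (Finset.subset_erase.2 ⟨(hface F hF).1, hxF⟩) ?_
    rw [Finset.card_erase_of_mem hxV, hV, (hface F hF).2]
    omega
  -- Step B: cardinality of an intersection of faces indexed by a nonempty `t ⊆ ℱ`
  have hinf_card : ∀ (t : Finset (Finset α)) (ht : t.Nonempty), t ⊆ ℱ →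
      (t.inf' ht id).card = ℓ + 1 - t.card := by
    intro t ht htℱ
    have hinf_eq : t.inf' ht id = V \ t.biUnion (fun F => V \ F) := by
      ext x
      simp only [Finset.mem_inf', id_eq, Finset.mem_sdiff, Finset.mem_biUnion, not_exists]
      constructor
      · intro h
        obtain ⟨F₀, hF₀⟩ := ht
        refine ⟨(hface F₀ (htℱ hF₀)).1 (h F₀ hF₀), fun F hF => ?_⟩
        exact (hF.2.2 (h F hF.1)).elim
      · rintro ⟨hxV, hnot⟩ F hF
        by_contra hxF
        exact hnot F ⟨hF, hxV, hxF⟩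
    rw [hinf_eq, Finset.card_sdiff_of_subset (by
      intro x hx
      obtain ⟨F, hF, hxF⟩ := Finset.mem_biUnion.1 hx
      exact (Finset.mem_sdiff.1 hxF).1)]
    have hcard1 : ∀ F ∈ t, (V \ F).card = 1 := by
      intro F hF
      rw [Finset.card_sdiff_of_subset (hface F (htℱ hF)).1, hV, (hface F (htℱ hF)).2]
      omega
    have hdisj : ∀ F ∈ t, ∀ F' ∈ t, F ≠ F' → Disjoint (V \ F) (V \ F') := by
      intro F hF F' hF' hne'
      rw [Finset.disjoint_left]
      intro x hx hx'
      obtain ⟨hxV, hxF⟩ := Finset.mem_sdiff.1 hx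
      obtain ⟨_, hxF'⟩ := Finset.mem_sdiff.1 hx'
      exact hne' ((hface_eq (htℱ hF) hxV hxF).trans (hface_eq (htℱ hF') hxV hxF').symm)
    rw [Finset.card_biUnion hdisj, Finset.sum_congr rfl hcard1, Finset.sum_const,
      smul_eq_mul, mul_one, hV]
  -- Step C: each intersection of `powersetCard`s is a `powersetCard` of the intersection
  have hterm : ∀ (t : Finset (Finset α)) (ht : t.Nonempty), t ⊆ ℱ →
      (t.inf' ht (fun F => F.powersetCard (k + 1))).card = (ℓ + 1 - t.card).choose (k + 1) := by
    intro t ht htℱ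
    have : t.inf' ht (fun F => F.powersetCard (k + 1))
        = (t.inf' ht id).powersetCard (k + 1) := by
      ext K
      simp only [Finset.mem_inf', Finset.mem_powersetCard, id_eq]
      constructor
      · intro h
        refine ⟨Finset.le_inf' ht (fun x => x) (fun F hF => (h F hF).1), ?_⟩
        obtain ⟨F₀, hF₀⟩ := ht.exists_mem
        exact (h F₀ hF₀).2
      · rintro ⟨hK, hKcard⟩ F hF
        exact ⟨hK.trans (Finset.inf'_le (fun x => x) hF), hKcard⟩
    rw [this, Finset.card_powersetCard, hinf_card t ht htℱ]
  -- Step D: inclusion–exclusion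
  rw [hset, Finset.inclusion_exclusion_card_biUnion]
  have hrw : ∀ t : (ℱ.powerset.filter (fun s => s.Nonempty) : Finset (Finset (Finset α))),
      (-1 : ℤ) ^ (t.1.card + 1) * ((t.1.inf' (Finset.mem_filter.1 t.2).2
          (fun F => F.powersetCard (k + 1))).card : ℤ)
        = (-1 : ℤ) ^ (t.1.card + 1) * (((ℓ + 1 - t.1.card).choose (k + 1) : ℕ) : ℤ) := by
    intro t
    have h2 := Finset.mem_filter.1 t.2
    rw [hterm t.1 h2.2 (Finset.mem_powerset.1 h2.1)]
  rw [Finset.sum_congr rfl (fun t _ => hrw t)]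
  -- Step E: turn the sum over the subtype into a sum over the filtered powerset
  rw [Finset.sum_coe_sort (ℱ.powerset.filter (fun s => s.Nonempty))
    (fun t => (-1 : ℤ) ^ (t.card + 1) * (((ℓ + 1 - t.card).choose (k + 1) : ℕ) : ℤ))]
  -- Step F: group subsets by cardinality
  have hmaps : ∀ t ∈ ℱ.powerset.filter (fun s => s.Nonempty), t.card ∈ Finset.Icc 1 m := by
    intro t ht
    obtain ⟨ht1, ht2⟩ := Finset.mem_filter.1 ht
    rw [Finset.mem_Icc]
    exact ⟨Finset.card_pos.2 ht2, hm ▸ Finset.card_le_card (Finset.mem_powerset.1 ht1)⟩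
  rw [← Finset.sum_fiberwise_of_maps_to hmaps]
  refine Finset.sum_congr rfl (fun r hr => ?_)
  obtain ⟨hr1, hr2⟩ := Finset.mem_Icc.1 hr
  have hfiber : (ℱ.powerset.filter (fun s => s.Nonempty)).filter (fun t => t.card = r)
      = ℱ.powersetCard r := by
    ext t
    simp only [Finset.mem_filter, Finset.mem_powerset, Finset.mem_powersetCard]
    constructor
    · rintro ⟨⟨h1, _⟩, h2⟩; exact ⟨h1, h2⟩
    · rintro ⟨h1, h2⟩
      exact ⟨⟨h1, Finset.card_pos.1 (by omega)⟩, h2⟩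
  have hconst : ∀ t ∈ (ℱ.powerset.filter (fun s => s.Nonempty)).filter
      (fun t => t.card = r),
      (-1 : ℤ) ^ (t.card + 1) * (((ℓ + 1 - t.card).choose (k + 1) : ℕ) : ℤ)
        = (-1 : ℤ) ^ (r + 1) * (((ℓ + 1 - r).choose (k + 1) : ℕ) : ℤ) := by
    intro t ht
    rw [(Finset.mem_filter.1 ht).2]
  rw [Finset.sum_congr rfl hconst, Finset.sum_const, hfiber, Finset.card_powersetCard, hm]
  have hsign : (-1 : ℤ) ^ (r + 1) = (-1 : ℤ) ^ (r - 1) := by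
    have : r + 1 = (r - 1) + 2 := by omega
    rw [this, pow_add]
    ring
  rw [hsign]
  push_cast
  ring
end

section
/- Let ℓ ≥ 1 and let V be a finite set with ℓ+1 elements. Let ℱ be a nonempty collection of m distinct subsets of V, each of cardinality ℓ. Then for every natural number j, the number of subsets K of V with |K| = ℓ+1−j that are contained in no member of ℱ equals the binomial coefficient C(ℓ+1−m, j); that is, the number of facets of codimension j in the complement of the union of the faces in ℱ is C(ℓ+1−m, j). -/
/-- Part (ii.2) of the simplex Lemma: the number of subsets `K ⊆ V` with
`|K| = ℓ+1-j` contained in no member of a nonempty collection `ℱ` of `m` faces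
of the `ℓ`-simplex with vertex set `V` equals `C(ℓ+1-m, j)`; i.e. the number of
facets of codimension `j` in the complement of the union of the faces is
`C(ℓ+1-m, j)`. -/
theorem simplex_lemma_complement_count {α : Type*} [DecidableEq α] (ℓ m : ℕ) (hℓ : 1 ≤ ℓ)
    (V : Finset α) (hV : V.card = ℓ + 1)
    (ℱ : Finset (Finset α)) (hne : ℱ.Nonempty) (hm : ℱ.card = m)
    (hface : ∀ F ∈ ℱ, F ⊆ V ∧ F.card = ℓ) (j : ℕ) :
    (V.powerset.filter (fun K => K.card = ℓ + 1 - j ∧ ∀ F ∈ ℱ, ¬ K ⊆ F)).card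
      = (ℓ + 1 - m).choose j := by
  classical
  set S : Finset α := ℱ.biUnion (fun F => V \ F) with hSdef
  have hsing : ∀ F ∈ ℱ, ∃ v, V \ F = {v} := by
    intro F hF
    refine Finset.card_eq_one.1 ?_
    rw [Finset.card_sdiff_of_subset (hface F hF).1, hV, (hface F hF).2]
    omega
  have hdisj : ∀ F₁ ∈ ℱ, ∀ F₂ ∈ ℱ, F₁ ≠ F₂ → Disjoint (V \ F₁) (V \ F₂) := by
    intro F₁ h₁ F₂ h₂ hne'
    rw [Finset.disjoint_left]
    intro v hv1 hv2
    obtain ⟨v₁, e₁⟩ := hsing F₁ h₁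
    obtain ⟨v₂, e₂⟩ := hsing F₂ h₂
    rw [e₁, Finset.mem_singleton] at hv1
    rw [e₂, Finset.mem_singleton] at hv2
    apply hne'
    have e : V \ F₁ = V \ F₂ := by rw [e₁, e₂, ← hv1, ← hv2]
    have := congrArg (V \ ·) e
    simpa [Finset.sdiff_sdiff_eq_self (hface F₁ h₁).1,
      Finset.sdiff_sdiff_eq_self (hface F₂ h₂).1] using this
  have hScard : S.card = m := by
    rw [hSdef, Finset.card_biUnion hdisj, ← hm]
    rw [Finset.sum_congr rfl (fun F hF => by
      obtain ⟨v, e⟩ := hsing F hF; rw [e, Finset.card_singleton])]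
    simp
  have hSV : S ⊆ V := Finset.biUnion_subset.2 fun F _ => Finset.sdiff_subset
  have hmle : m ≤ ℓ + 1 := by rw [← hScard, ← hV]; exact Finset.card_le_card hSV
  have hm1 : 1 ≤ m := hm ▸ Finset.card_pos.2 hne
  have hequiv : ∀ K ⊆ V, ((∀ F ∈ ℱ, ¬ K ⊆ F) ↔ S ⊆ K) := by
    intro K hK
    rw [hSdef, Finset.biUnion_subset]
    constructor
    · intro h F hF
      obtain ⟨x, hxK, hxF⟩ := Finset.not_subset.1 (h F hF)
      obtain ⟨v, e⟩ := hsing F hF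
      have : x ∈ V \ F := Finset.mem_sdiff.2 ⟨hK hxK, hxF⟩
      rw [e, Finset.mem_singleton] at this
      rw [e]; exact Finset.singleton_subset_iff.2 (this ▸ hxK)
    · intro h F hF
      obtain ⟨v, e⟩ := hsing F hF
      have hvK : v ∈ K := (e ▸ h F hF) (Finset.mem_singleton_self v)
      have hvF : v ∉ F := (Finset.mem_sdiff.1 (e ▸ Finset.mem_singleton_self v)).2
      exact fun hKF => hvF (hKF hvK)
  have hset : (V.powerset.filter (fun K => K.card = ℓ + 1 - j ∧ ∀ F ∈ ℱ, ¬ K ⊆ F))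
      = V.powerset.filter (fun K => K.card = ℓ + 1 - j ∧ S ⊆ K) := by
    apply Finset.filter_congr
    intro K hK
    rw [Finset.mem_powerset] at hK
    simp [hequiv K hK]
  rw [hset]
  by_cases hj : j ≤ ℓ + 1 - m
  · have hmn : m ≤ ℓ + 1 - j := by omega
    have hcard : (V.powerset.filter (fun K => K.card = ℓ + 1 - j ∧ S ⊆ K)).card
        = (Finset.powersetCard (ℓ + 1 - j - m) (V \ S)).card := by
      apply Finset.card_bij' (fun K _ => K \ S) (fun T _ => T ∪ S)
      · intro K hK
        simp only [Finset.mem_filter, Finset.mem_powerset] at hK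
        obtain ⟨hKV, hKc, hSK⟩ := hK
        simp only [Finset.mem_powersetCard]
        constructor
        · exact Finset.sdiff_subset_sdiff hKV le_rfl
        · rw [Finset.card_sdiff_of_subset hSK, hKc, hScard]
      · intro T hT
        simp only [Finset.mem_powersetCard] at hT
        obtain ⟨hTV, hTc⟩ := hT
        have hdT : Disjoint T S := Finset.disjoint_of_subset_left hTV Finset.sdiff_disjoint
        simp only [Finset.mem_filter, Finset.mem_powerset]
        refine ⟨Finset.union_subset (hTV.trans Finset.sdiff_subset) hSV, ?_, Finset.subset_union_right⟩
        rw [Finset.card_union_of_disjoint hdT, hTc, hScard]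
        omega
      · intro K hK
        simp only [Finset.mem_filter, Finset.mem_powerset] at hK
        exact Finset.sdiff_union_of_subset hK.2.2
      · intro T hT
        simp only [Finset.mem_powersetCard] at hT
        have hdT : Disjoint T S := Finset.disjoint_of_subset_left hT.1 Finset.sdiff_disjoint
        rw [Finset.union_sdiff_distrib, Finset.sdiff_self, Finset.union_empty,
          Finset.sdiff_eq_self_of_disjoint hdT]
    rw [hcard, Finset.card_powersetCard, Finset.card_sdiff_of_subset hSV, hV, hScard,
      show ℓ + 1 - j - m = (ℓ + 1 - m) - j by omega, Nat.choose_symm hj]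
  · rw [Nat.choose_eq_zero_of_lt (by omega)]
    rw [Finset.card_eq_zero, Finset.filter_eq_empty_iff]
    intro K hK
    rw [Finset.mem_powerset] at hK
    rintro ⟨hKc, hSK⟩
    have := Finset.card_le_card hSK
    rw [hScard, hKc] at this
    omega
end

section
/- Let ℓ, k, m be natural numbers with k+2 ≤ m ≤ ℓ+1. Then, as integers, C(ℓ+1, k+1) = ∑_{r=1}^{m} (−1)^{r−1} · C(ℓ+1−r, k+1) · C(m, r). -/
open Finset

private lemma simplex_aux (K : ℕ) : ∀ m n : ℕ, m ≤ n →
    (∑ r ∈ range (m + 1), (-1 : ℤ) ^ r * (m.choose r : ℤ) * ((n - r).choose K : ℤ))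
      = if K < m then 0 else ((n - m).choose (K - m) : ℤ) := by
  intro m
  induction m with
  | zero => intro n hn; simp
  | succ m ih =>
    intro n hn
    have hmn1 : m ≤ n - 1 := by omega
    have hmn : m ≤ n := by omega
    have h1 : (∑ r ∈ range (m + 2),
        (-1 : ℤ) ^ r * ((m + 1).choose r : ℤ) * ((n - r).choose K : ℤ))
        = ((n).choose K : ℤ)
          + ∑ s ∈ range (m + 1),
              (-1 : ℤ) ^ (s + 1) * ((m.choose (s + 1) : ℤ) + (m.choose s : ℤ))
                * ((n - 1 - s).choose K : ℤ) := by
      rw [Finset.sum_range_succ' (fun r => (-1 : ℤ) ^ r * ((m + 1).choose r : ℤ) * ((n - r).choose K : ℤ)) (m + 1)]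
      simp only [Nat.choose_zero_right, pow_zero, Nat.sub_zero, one_mul, Nat.cast_one]
      rw [add_comm]
      congr 1
      apply Finset.sum_congr rfl
      intro s hs
      have : n - (s + 1) = n - 1 - s := by omega
      rw [this, Nat.choose_succ_succ]
      push_cast
      ring
    have h2 : (∑ s ∈ range (m + 1),
        (-1 : ℤ) ^ (s + 1) * (m.choose (s + 1) : ℤ) * ((n - 1 - s).choose K : ℤ))
        = (∑ r ∈ range (m + 1), (-1 : ℤ) ^ r * (m.choose r : ℤ) * ((n - r).choose K : ℤ))
          - ((n).choose K : ℤ) := by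
      have := Finset.sum_range_succ' (fun r => (-1 : ℤ) ^ r * (m.choose r : ℤ) * ((n - r).choose K : ℤ)) (m + 1)
      have hcongr : ∀ s ∈ range (m + 1),
          (-1 : ℤ) ^ (s + 1) * (m.choose (s + 1) : ℤ) * ((n - (s + 1)).choose K : ℤ)
          = (-1 : ℤ) ^ (s + 1) * (m.choose (s + 1) : ℤ) * ((n - 1 - s).choose K : ℤ) := by
        intro s hs
        have : n - (s + 1) = n - 1 - s := by omega
        rw [this]
      rw [Finset.sum_congr rfl hcongr] at this
      rw [Finset.sum_range_succ] at this
      simp only [Nat.choose_self, Nat.choose_succ_self, Nat.cast_zero, Nat.cast_one,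
        Nat.choose_zero_right, pow_zero, Nat.sub_zero, one_mul, mul_zero, zero_mul, mul_one,
        add_zero] at this ⊢
      linarith [this]
    have h3 : (∑ s ∈ range (m + 1),
        (-1 : ℤ) ^ (s + 1) * (m.choose s : ℤ) * ((n - 1 - s).choose K : ℤ))
        = -∑ r ∈ range (m + 1), (-1 : ℤ) ^ r * (m.choose r : ℤ) * ((n - 1 - r).choose K : ℤ) := by
      rw [← Finset.sum_neg_distrib]
      apply Finset.sum_congr rfl
      intro s hs
      ring
    have key : (∑ r ∈ range (m + 2),
        (-1 : ℤ) ^ r * ((m + 1).choose r : ℤ) * ((n - r).choose K : ℤ))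
        = (∑ r ∈ range (m + 1), (-1 : ℤ) ^ r * (m.choose r : ℤ) * ((n - r).choose K : ℤ))
          - ∑ r ∈ range (m + 1), (-1 : ℤ) ^ r * (m.choose r : ℤ) * ((n - 1 - r).choose K : ℤ) := by
      rw [h1]
      have : ∀ s ∈ range (m + 1),
          (-1 : ℤ) ^ (s + 1) * ((m.choose (s + 1) : ℤ) + (m.choose s : ℤ)) * ((n - 1 - s).choose K : ℤ)
          = (-1 : ℤ) ^ (s + 1) * (m.choose (s + 1) : ℤ) * ((n - 1 - s).choose K : ℤ)
            + (-1 : ℤ) ^ (s + 1) * (m.choose s : ℤ) * ((n - 1 - s).choose K : ℤ) := by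
        intro s hs; ring
      rw [Finset.sum_congr rfl this, Finset.sum_add_distrib, h2, h3]
      ring
    rw [key, ih n hmn, ih (n - 1) hmn1]
    have hnm : n - 1 - m = n - (m + 1) := by omega
    rw [hnm]
    by_cases hK : K < m
    · simp [hK, show K < m + 1 by omega]
    · by_cases hK2 : K = m
      · subst hK2
        simp [Nat.lt_irrefl, show K < K + 1 by omega]
      · have hKm : m < K := by omega
        simp only [if_neg hK, if_neg (by omega : ¬ K < m + 1)]
        have ha : 1 ≤ n - m := by omega
        have hb : 1 ≤ K - m := by omega
        have e1 : n - m = (n - (m + 1)) + 1 := by omega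
        have e2 : K - m = (K - (m + 1)) + 1 := by omega
        rw [e1, e2, Nat.choose_succ_succ]
        push_cast
        ring

/-- The binomial identity underlying the case `m ≥ k+2` of the simplex Lemma:
for `k+2 ≤ m ≤ ℓ+1`,
`C(ℓ+1, k+1) = ∑_{r=1}^{m} (-1)^{r-1} C(ℓ+1-r, k+1) C(m, r)` as integers. -/
theorem simplex_lemma_binomial_identity_large (ℓ k m : ℕ) (hkm : k + 2 ≤ m)
    (hmℓ : m ≤ ℓ + 1) :
    ((ℓ + 1).choose (k + 1) : ℤ)
      = ∑ r ∈ Finset.Icc 1 m,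
          (-1 : ℤ) ^ (r - 1) * ((ℓ + 1 - r).choose (k + 1) : ℤ) * (m.choose r : ℤ) := by
  have h := simplex_aux (k + 1) m (ℓ + 1) hmℓ
  rw [if_pos (by omega)] at h
  rw [Finset.sum_range_succ'] at h
  simp only [Nat.choose_zero_right, pow_zero, Nat.sub_zero, one_mul, Nat.cast_one] at h
  have htarget : (∑ r ∈ Finset.Icc 1 m,
      (-1 : ℤ) ^ (r - 1) * ((ℓ + 1 - r).choose (k + 1) : ℤ) * (m.choose r : ℤ))
      = ∑ s ∈ range m, (-1 : ℤ) ^ s * ((ℓ - s).choose (k + 1) : ℤ) * (m.choose (s + 1) : ℤ) := by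
    rw [← Finset.Ico_add_one_right_eq_Icc, Finset.sum_Ico_eq_sum_range]
    apply Finset.sum_congr (by congr 1)
    intro s hs
    have e1 : 1 + s - 1 = s := by omega
    have e2 : ℓ + 1 - (1 + s) = ℓ - s := by omega
    have e3 : 1 + s = s + 1 := by omega
    rw [e1, e2, e3]
  rw [htarget]
  have : ∀ s ∈ range m, (-1 : ℤ) ^ (s + 1) * (m.choose (s + 1) : ℤ) * ((ℓ + 1 - (s + 1)).choose (k + 1) : ℤ)
      = -((-1 : ℤ) ^ s * ((ℓ - s).choose (k + 1) : ℤ) * (m.choose (s + 1) : ℤ)) := by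
    intro s hs
    have e : ℓ + 1 - (s + 1) = ℓ - s := by omega
    rw [e]; ring
  rw [Finset.sum_congr rfl this, Finset.sum_neg_distrib] at h
  linarith [h]
end
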